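/- Let π: L_S → S be a continuous map equipped with a continuous fiber-preserving ℤ × ℝ-action and a linear order on each fiber, satisfying properties (Q1), (Q4), and (Q5). Then the following are equivalent: (Q3) the induced projection L_S/ℤ → S from the ℤ-orbit space is a closed map; (Q3') for every open U ⊆ S and every continuous section σ: U → π⁻¹(U) of π, the restriction of π to K_σ = {x ∈ π⁻¹(U) : σ(π(x)) ≤ x ≤ σ(π(x)) + 1} (inequalities in the fiber order, +1 the action of 1 ∈ ℤ) is a closed map to U. -/

import Mathlib

open Topology

noncomputable section

/-! ### Combinatorial index data: parasimplices and paracyclic preorders -/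

/-- A set with a "preorder" relation and a `ℤ`-action. -/
structure IdxData (I : Type*) where
  le : I → I → Prop
  shift : ℤ → I → I

namespace IdxData

variable {I : Type*}

/-- `D` is a parasimplex. -/
structure IsParasimplex (D : IdxData I) : Prop where
  le_refl : ∀ i, D.le i i
  le_trans : ∀ i j k, D.le i j → D.le j k → D.le i k
  le_antisymm : ∀ i j, D.le i j → D.le j i → i = j
  le_total : ∀ i j, D.le i j ∨ D.le j i
  shift_zero : ∀ i, D.shift 0 i = i
  shift_add : ∀ m n i, D.shift (m + n) i = D.shift m (D.shift n i)
  shift_mono : ∀ n i j, D.le i j → D.le (D.shift n i) (D.shift n j)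
  le_shift_one : ∀ i, D.le i (D.shift 1 i)
  shift_one_ne : ∀ i, D.shift 1 i ≠ i
  between_finite : ∀ i j, D.le i j → {k | D.le i k ∧ D.le k j}.Finite

/-- `D` is a paracyclic preorder. -/
structure IsParacyclicPreorder (D : IdxData I) : Prop where
  countable : Countable I
  le_refl : ∀ i, D.le i i
  le_trans : ∀ i j k, D.le i j → D.le j k → D.le i k
  le_total : ∀ i j, D.le i j ∨ D.le j i
  shift_zero : ∀ i, D.shift 0 i = i
  shift_add : ∀ m n i, D.shift (m + n) i = D.shift m (D.shift n i)
  shift_free : ∀ n i, D.shift n i = i → n = 0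
  shift_mono_one : ∀ i j, D.le i j → D.le (D.shift 1 i) (D.shift 1 j)
  le_shift_one : ∀ i, D.le i (D.shift 1 i)
  not_shift_one_le : ∀ i, ¬ D.le (D.shift 1 i) i
  between_classes_finite : ∀ i j, D.le i j →
    ((Quot.mk fun a b => D.le a b ∧ D.le b a) '' {k | D.le i k ∧ D.le k j}).Finite

/-- The dual `𝔻 I`: weakly order-preserving surjections onto `{0 < 1}`. -/
def DType (D : IdxData I) : Type _ :=
  {e : I → Fin 2 // (∀ i j, D.le i j → e i ≤ e j) ∧ Function.Surjective e}

/-- The order and `ℤ`-action on `𝔻 I`. -/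
def DData (D : IdxData I) (hD : D.IsParasimplex) : IdxData (D.DType) where
  le e e' := ∀ i, e.1 i ≤ e'.1 i
  shift n e :=
    ⟨fun i => e.1 (D.shift (-n) i),
     fun i j hij => e.2.1 _ _ (hD.shift_mono _ _ _ hij),
     fun b => by
      obtain ⟨i, hi⟩ := e.2.2 b
      refine ⟨D.shift n i, ?_⟩
      show e.1 (D.shift (-n) (D.shift n i)) = b
      rw [← hD.shift_add, neg_add_cancel, hD.shift_zero, hi]⟩

end IdxData

/-! ### Broken paracycles -/

/-- Data of a `ℤ × ℝ`-action and an order on a space. -/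
structure ParaData (L : Type*) where
  act : ℤ × ℝ → L → L
  le : L → L → Prop

namespace ParaData

/-- The set of `ℝ`-fixed points. -/
def rFixed {L : Type*} (D : ParaData L) : Set L := {x | ∀ t : ℝ, D.act (0, t) x = x}

/-- Definition of a broken paracycle. -/
structure IsBrokenParacycle {L : Type*} [TopologicalSpace L] (D : ParaData L) : Prop where
  act_zero : ∀ x, D.act 0 x = x
  act_add : ∀ g h x, D.act (g + h) x = D.act g (D.act h x)
  act_cont : Continuous fun p : (ℤ × ℝ) × L => D.act p.1 p.2
  exists_homeo : ∃ φ : L ≃ₜ ℝ, ∀ x y, D.le x y ↔ φ x ≤ φ y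
  z_free : ∀ (n : ℤ) (x : L), D.act (n, 0) x = x → n = 0
  r_directed : ∀ t : ℝ, 0 ≤ t → ∀ x, D.le x (D.act (0, t) x)
  z_directed : ∀ x, D.le x (D.act (1, 0) x)
  fixed_discrete : DiscreteTopology D.rFixed
  fixed_nonempty : D.rFixed.Nonempty

open Classical in
/-- The translation distance on a broken paracycle, valued in `[-∞,∞]`. -/
noncomputable def dist {L : Type*} (D : ParaData L) (x y : L) : EReal :=
  if h : ∃ t : ℝ, D.act (0, t) x = y then ((h.choose : ℝ) : EReal)
  else if D.le x y then ⊤ else ⊥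

end ParaData

/-! ### Families of broken paracycles -/

/-- A continuous map `π : E → S` equipped with a continuous fiber-preserving
`ℤ × ℝ`-action and a linear order on each fiber. -/
structure PreFamily (S E : Type*) [TopologicalSpace S] [TopologicalSpace E] where
  π : E → S
  act : ℤ × ℝ → E → E
  fle : E → E → Prop
  π_cont : Continuous π
  act_zero : ∀ x, act 0 x = x
  act_add : ∀ g h x, act (g + h) x = act g (act h x)
  act_cont : Continuous fun p : (ℤ × ℝ) × E => act p.1 p.2
  act_fiber : ∀ g x, π (act g x) = π x
  fle_fiber : ∀ x y, fle x y → π x = π y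
  fle_refl : ∀ x, fle x x
  fle_trans : ∀ x y z, fle x y → fle y z → fle x z
  fle_antisymm : ∀ x y, fle x y → fle y x → x = y
  fle_total : ∀ x y, π x = π y → fle x y ∨ fle y x

namespace PreFamily

variable {S E : Type*} [TopologicalSpace S] [TopologicalSpace E]

/-- The fiber over `s`, with its induced `ℤ × ℝ`-action and order. -/
def fiberData (F : PreFamily S E) (s : S) : ParaData {x : E // F.π x = s} where
  act g x := ⟨F.act g x.1, by rw [F.act_fiber]; exact x.2⟩
  le x y := F.fle x.1 y.1

/-- The `ℝ`-fixed locus of the total space. -/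
def rFixed (F : PreFamily S E) : Set E := {x | ∀ t : ℝ, F.act (0, t) x = x}

/-- (Q1): each fiber is a broken paracycle. -/
def Q1 (F : PreFamily S E) : Prop := ∀ s : S, (F.fiberData s).IsBrokenParacycle

/-- The relation "lying in the same `ℤ`-orbit". -/
def zrel (F : PreFamily S E) (x y : E) : Prop := ∃ n : ℤ, F.act (n, 0) x = y

/-- The quotient of the total space by the `ℤ`-action. -/
def ZQuot (F : PreFamily S E) : Type _ := Quot F.zrel

instance (F : PreFamily S E) : TopologicalSpace F.ZQuot :=
  inferInstanceAs (TopologicalSpace (Quot F.zrel))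

/-- The projection `L_S/ℤ → S`. -/
def qπ (F : PreFamily S E) : F.ZQuot → S :=
  Quot.lift F.π (by rintro x y ⟨n, rfl⟩; rw [F.act_fiber])

/-- The induced `ℝ`-action on `L_S/ℤ`. -/
def qract (F : PreFamily S E) (t : ℝ) : F.ZQuot → F.ZQuot :=
  Quot.map (F.act (0, t)) (by
    rintro x y ⟨n, rfl⟩
    exact ⟨n, by rw [← F.act_add, ← F.act_add]; ring_nf⟩)

/-- The `ℝ`-fixed locus of `L_S/ℤ`. -/
def qrFixed (F : PreFamily S E) : Set F.ZQuot := {q | ∀ t : ℝ, F.qract t q = q}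

/-- (Q2): the `ℝ`-fixed locus is unramified modulo `ℤ`. -/
def Q2 (F : PreFamily S E) : Prop :=
  ∀ s : S, ∃ U : Set S, IsOpen U ∧ s ∈ U ∧
    ∃ (m : ℕ) (K : Fin m → Set F.ZQuot),
      ({q | q ∈ F.qrFixed ∧ F.qπ q ∈ U} = ⋃ a, K a) ∧
      (∀ a b, a ≠ b → Disjoint (K a) (K b)) ∧
      (∀ a, IsClosed (Subtype.val ⁻¹' (K a) : Set (F.qπ ⁻¹' U))) ∧
      (∀ a, ∃ f : (K a) → (U : Set S),
        (∀ q, (f q : S) = F.qπ q.1) ∧ IsClosedEmbedding f)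

/-- (Q3): the projection `L_S/ℤ → S` is a closed map. -/
def Q3 (F : PreFamily S E) : Prop := IsClosedMap F.qπ

/-- The fiber product `L_S ×_S L_S`. -/
def fibProd (F : PreFamily S E) : Set (E × E) := {p | F.π p.1 = F.π p.2}

/-- (Q4): the fiberwise order relation is closed in the fiber product. -/
def Q4 (F : PreFamily S E) : Prop :=
  IsClosed {p : F.fibProd | F.fle p.1.1 p.1.2}

/-- (Q5): local lifting away from the fixed locus. -/
def Q5 (F : PreFamily S E) : Prop :=
  ∀ x : E, x ∉ F.rFixed →
    ∃ U : Set S, IsOpen U ∧ F.π x ∈ U ∧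
      ∃ σ : U → E, Continuous σ ∧ (∀ u, F.π (σ u) = (u : S)) ∧
        (∀ u, σ u ∉ F.rFixed) ∧ (∀ u : U, (u : S) = F.π x → σ u = x)

/-- A family of broken paracycles is a datum satisfying (Q1)–(Q5). -/
def IsFamily (F : PreFamily S E) : Prop := F.Q1 ∧ F.Q2 ∧ F.Q3 ∧ F.Q4 ∧ F.Q5

open Classical in
/-- The fiberwise translation distance. -/
noncomputable def fdist (F : PreFamily S E) (x y : E) : EReal :=
  if h : ∃ t : ℝ, F.act (0, t) x = y then ((h.choose : ℝ) : EReal)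
  else if F.fle x y then ⊤ else ⊥

/-- The restriction of a family to a subset of the base. -/
def restrict (F : PreFamily S E) (U : Set S) : PreFamily U (F.π ⁻¹' U) where
  π x := ⟨F.π x.1, x.2⟩
  act g x := ⟨F.act g x.1, by simp only [Set.mem_preimage, F.act_fiber]; exact x.2⟩
  fle x y := F.fle x.1 y.1
  π_cont := Continuous.subtype_mk (F.π_cont.comp continuous_subtype_val) _
  act_zero x := by simp [F.act_zero]
  act_add g h x := by simp [F.act_add]
  act_cont := by
    apply Continuous.subtype_mk
    exact F.act_cont.comp (continuous_fst.prodMk (continuous_subtype_val.comp continuous_snd))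
  act_fiber g x := by simp [F.act_fiber]
  fle_fiber x y h := by
    apply Subtype.ext; exact F.fle_fiber _ _ h
  fle_refl x := F.fle_refl x.1
  fle_trans x y z := F.fle_trans x.1 y.1 z.1
  fle_antisymm x y h h' := Subtype.ext (F.fle_antisymm _ _ h h')
  fle_total x y h := F.fle_total x.1 y.1 (congrArg Subtype.val h)

/-- An `I`-section of a family of broken paracycles. -/
structure IsISection {I : Type*} (F : PreFamily S E) (D : IdxData I) (σ : S × I → E) : Prop where
  cont : ∀ i, Continuous fun s => σ (s, i)
  sect : ∀ s i, F.π (σ (s, i)) = s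
  not_fixed : ∀ s i, σ (s, i) ∉ F.rFixed
  surj : ∀ (s : S) (x : E), F.π x = s → x ∉ F.rFixed →
    ∃ (i : I) (t : ℝ), F.act (0, t) (σ (s, i)) = x
  directed : ∀ s i i', D.le i i' → ∃ t : ℝ, F.fle (F.act (0, t) (σ (s, i))) (σ (s, i'))
  equivariant : ∀ s i, σ (s, D.shift 1 i) = F.act (1, 0) (σ (s, i))

end PreFamily

/-! ### Auxiliary lemmas for `Q3_iff_Q3'` -/

section Aux

open Set Filter Topology

lemma relClosed_iff {X : Type*} [TopologicalSpace X] {A B : Set X} (hAB : A ⊆ B) :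
    IsClosed (Subtype.val ⁻¹' A : Set B) ↔ closure A ∩ B ⊆ A := by
  constructor
  · intro h
    rintro x ⟨hxc, hxB⟩
    obtain ⟨C, hC, hCe⟩ := (Topology.IsInducing.subtypeVal.isClosed_iff).mp h
    have hAC : A ⊆ C := by
      intro a ha
      have : (⟨a, hAB ha⟩ : B) ∈ Subtype.val ⁻¹' A := ha
      rw [← hCe] at this
      exact this
    have hxC : x ∈ C := hC.closure_subset_iff.mpr hAC hxc
    have : (⟨x, hxB⟩ : B) ∈ Subtype.val ⁻¹' C := hxC
    rw [hCe] at this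
    exact this
  · intro h
    refine (Topology.IsInducing.subtypeVal.isClosed_iff).mpr ⟨closure A, isClosed_closure, ?_⟩
    ext y
    exact ⟨fun hy => h ⟨hy, y.2⟩, fun hy => subset_closure hy⟩

namespace PreFamily

variable {S E : Type*} [TopologicalSpace S] [TopologicalSpace E] (F : PreFamily S E)

lemma zprod_add' (m n : ℤ) : ((m, 0) + (n, 0) : ℤ × ℝ) = (m + n, 0) := by
  simp [Prod.ext_iff]

lemma act_nadd (m n : ℤ) (x : E) :
    F.act (m + n, 0) x = F.act (m, 0) (F.act (n, 0) x) := by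
  rw [← zprod_add', F.act_add]

lemma act_zero' (x : E) : F.act ((0 : ℤ), (0 : ℝ)) x = x := F.act_zero x

lemma act_congr (m n : ℤ) (x : E) (h : m = n) : F.act (m, 0) x = F.act (n, 0) x := by rw [h]

lemma act_cancel (n : ℤ) (x : E) : F.act (-n, 0) (F.act (n, 0) x) = x := by
  rw [← F.act_nadd, neg_add_cancel, F.act_zero']

lemma act_cont_n (n : ℤ) : Continuous fun x : E => F.act (n, 0) x :=
  F.act_cont.comp (continuous_const.prodMk continuous_id)

lemma act_free (h1 : F.Q1) (n : ℤ) (x : E) (h : F.act (n, 0) x = x) : n = 0 :=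
  (h1 (F.π x)).z_free n ⟨x, rfl⟩ (Subtype.ext h)

lemma act_ne (h1 : F.Q1) {m n : ℤ} (h : m ≠ n) (x : E) :
    F.act (m, 0) x ≠ F.act (n, 0) x := by
  intro he
  apply h
  have h2 : F.act (-n, 0) (F.act (m, 0) x) = x := by rw [he, F.act_cancel]
  rw [← F.act_nadd] at h2
  have := F.act_free h1 _ _ h2
  omega

lemma le_succ (h1 : F.Q1) (x : E) : F.fle x (F.act (1, 0) x) :=
  (h1 (F.π x)).z_directed ⟨x, rfl⟩

lemma chain (h1 : F.Q1) {m n : ℤ} (h : m ≤ n) (x : E) :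
    F.fle (F.act (m, 0) x) (F.act (n, 0) x) := by
  have H : ∀ k, m ≤ k → F.fle (F.act (m, 0) x) (F.act (k, 0) x) := by
    refine Int.le_induction ?_ ?_
    · exact F.fle_refl _
    · intro k hk ih
      refine F.fle_trans _ _ _ ih ?_
      have h2 := F.le_succ h1 (F.act (k, 0) x)
      rw [← F.act_nadd] at h2
      rwa [F.act_congr (1 + k) (k + 1) x (by ring)] at h2
  exact H n h

lemma mono_one (h1 : F.Q1) {x y : E} (hxy : F.π x = F.π y) (hle : F.fle x y) :
    F.fle (F.act (1, 0) x) (F.act (1, 0) y) := by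
  set s := F.π y with hs
  have hBP := h1 s
  obtain ⟨φ, hφ⟩ := hBP.exists_homeo
  set D := F.fiberData (S := S) s with hD
  have hcontA : Continuous fun z : {z : E // F.π z = s} => D.act (1, 0) z :=
    hBP.act_cont.comp (continuous_const.prodMk continuous_id)
  set g : ℝ → ℝ := fun r => φ (D.act (1, 0) (φ.symm r)) with hg
  have hgc : Continuous g := φ.continuous.comp (hcontA.comp φ.symm.continuous)
  have hcancel : ∀ w : {z : E // F.π z = s}, D.act (-1, 0) (D.act (1, 0) w) = w :=
    fun w => Subtype.ext (F.act_cancel 1 w.1)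
  have hginj : Function.Injective g := by
    intro r r' h
    have h2 : D.act (1, 0) (φ.symm r) = D.act (1, 0) (φ.symm r') := φ.injective h
    have h3 : φ.symm r = φ.symm r' := by
      have := congrArg (fun w => D.act (-1, 0) w) h2
      simpa [hcancel] using this
    exact φ.symm.injective h3
  have hgr : ∀ r, r < g r := by
    intro r
    have ha : D.le (φ.symm r) (D.act (1, 0) (φ.symm r)) := hBP.z_directed _
    have hb := (hφ _ _).mp ha
    rw [φ.apply_symm_apply] at hb
    rcases lt_or_eq_of_le hb with h | h
    · exact h
    · exfalso
      have h2 : D.act (1, 0) (φ.symm r) = φ.symm r := by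
        apply φ.injective
        rw [← h, φ.apply_symm_apply]
      exact one_ne_zero (hBP.z_free 1 _ h2)
  have hmono : ∀ u v : ℝ, u ≤ v → g u ≤ g v := by
    intro u v huv
    by_contra hcon
    push_neg at hcon
    have huv' : u < v := by
      rcases huv.lt_or_eq with h | h
      · exact h
      · exfalso; rw [h] at hcon; exact lt_irrefl _ hcon
    obtain ⟨c, hc1, hc2⟩ := exists_between hcon
    obtain ⟨w1, hw1, hw1e⟩ := intermediate_value_Icc' huv'.le hgc.continuousOn
      (⟨hc1.le, hc2.le⟩ : c ∈ Set.Icc (g v) (g u))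
    have hvc : v ≤ c := ((hgr v).trans hc1).le
    obtain ⟨w2, hw2, hw2e⟩ := intermediate_value_Icc hvc hgc.continuousOn
      (⟨hc1.le, (hgr c).le⟩ : c ∈ Set.Icc (g v) (g c))
    have hww : w1 = w2 := hginj (hw1e.trans hw2e.symm)
    have hv : w1 = v := le_antisymm hw1.2 (hww ▸ hw2.1)
    rw [hv] at hw1e
    exact absurd hw1e (ne_of_lt hc1)
  have hle' : D.le ⟨x, hxy⟩ ⟨y, rfl⟩ := hle
  have h2 := hmono _ _ ((hφ _ _).mp hle')
  simp only [hg, φ.symm_apply_apply] at h2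
  exact (hφ (D.act (1, 0) ⟨x, hxy⟩) (D.act (1, 0) ⟨y, rfl⟩)).mpr h2

lemma mono_n (h1 : F.Q1) (n : ℤ) {x y : E} (hxy : F.π x = F.π y) (h : F.fle x y) :
    F.fle (F.act (n, 0) x) (F.act (n, 0) y) := by
  induction n using Int.induction_on with
  | zero => simpa only [F.act_zero'] using h
  | succ k ih =>
    have hπ : F.π (F.act ((k : ℤ), 0) x) = F.π (F.act ((k : ℤ), 0) y) := by
      rw [F.act_fiber, F.act_fiber, hxy]
    have h2 := F.mono_one h1 hπ ih
    rw [← F.act_nadd, ← F.act_nadd] at h2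
    rwa [F.act_congr (1 + (k : ℤ)) ((k : ℤ) + 1) x (by ring),
      F.act_congr (1 + (k : ℤ)) ((k : ℤ) + 1) y (by ring)] at h2
  | pred k ih =>
    have hπ : F.π (F.act (-(k : ℤ) - 1, 0) x) = F.π (F.act (-(k : ℤ) - 1, 0) y) := by
      rw [F.act_fiber, F.act_fiber, hxy]
    rcases F.fle_total _ _ hπ with h' | h'
    · exact h'
    · have h2 := F.mono_one h1 hπ.symm h'
      rw [← F.act_nadd, ← F.act_nadd] at h2
      rw [F.act_congr (1 + (-(k : ℤ) - 1)) (-(k : ℤ)) y (by ring),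
        F.act_congr (1 + (-(k : ℤ) - 1)) (-(k : ℤ)) x (by ring)] at h2
      have heq : F.act (-(k : ℤ), 0) x = F.act (-(k : ℤ), 0) y := F.fle_antisymm _ _ ih h2
      have heq2 : F.act (-(k : ℤ) - 1, 0) x = F.act (-(k : ℤ) - 1, 0) y := by
        have h3 := congrArg (fun w => F.act (-1, 0) w) heq
        simp only [← F.act_nadd] at h3
        rwa [F.act_congr (-1 + -(k : ℤ)) (-(k : ℤ) - 1) x (by ring),
          F.act_congr (-1 + -(k : ℤ)) (-(k : ℤ) - 1) y (by ring)] at h3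
      rw [heq2]
      exact F.fle_refl _

lemma bracket (h1 : F.Q1) {a x : E} (hax : F.π a = F.π x) :
    ∃ n : ℤ, F.fle (F.act (n, 0) a) x ∧ F.fle x (F.act (n + 1, 0) a) := by
  set s := F.π x with hs
  have hBP := h1 s
  obtain ⟨φ, hφ⟩ := hBP.exists_homeo
  set D := F.fiberData (S := S) s with hD
  have hT2 : T2Space {z : E // F.π z = s} := φ.isEmbedding.t2Space
  set w : ℤ → {z : E // F.π z = s} :=
    fun n => ⟨F.act (n, 0) a, by rw [F.act_fiber]; exact hax⟩ with hw
  set f : ℤ → ℝ := fun n => φ (w n) with hf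
  have hfmono : Monotone f := fun m n hmn => (hφ _ _).mp (F.chain h1 hmn a)
  have hrec : ∀ (e : ℤ) (v : ℕ → {z : E // F.π z = s}) (z : {z : E // F.π z = s}),
      Filter.Tendsto v Filter.atTop (𝓝 z) → (∀ k, D.act (e, 0) (v k) = v (k + 1)) → e = 0 := by
    intro e v z hv hr
    have hc : Continuous fun q : {z : E // F.π z = s} => D.act (e, 0) q :=
      hBP.act_cont.comp (continuous_const.prodMk continuous_id)
    have ht1 : Filter.Tendsto (fun k => D.act (e, 0) (v k)) Filter.atTop (𝓝 (D.act (e, 0) z)) :=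
      (hc.tendsto z).comp hv
    have ht2 : Filter.Tendsto (fun k => v (k + 1)) Filter.atTop (𝓝 z) :=
      hv.comp (Filter.tendsto_add_atTop_nat 1)
    have h3 : D.act (e, 0) z = z := tendsto_nhds_unique (by simpa [hr] using ht1) ht2
    exact hBP.z_free e z h3
  have hub : ∀ M : ℝ, ∃ n : ℤ, f n < M := by
    by_contra hcon
    push_neg at hcon
    obtain ⟨M, hM⟩ := hcon
    set c : ℕ → ℝ := fun k => f (-(k : ℤ)) with hc
    have hanti : Antitone c := fun k k' hk => hfmono (by omega)
    have hbdd : BddBelow (Set.range c) := ⟨M, by rintro r ⟨k, rfl⟩; exact hM _⟩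
    have hlim := tendsto_atTop_ciInf hanti hbdd
    have hwlim : Filter.Tendsto (fun k : ℕ => w (-(k : ℤ))) Filter.atTop
        (𝓝 (φ.symm (⨅ k, c k))) := by
      have h2 := (φ.symm.continuous.tendsto _).comp hlim
      simpa [Function.comp_def, hc, hf, φ.symm_apply_apply] using h2
    have hne : (-1 : ℤ) = 0 := by
      refine hrec (-1) (fun k => w (-(k : ℤ))) _ hwlim fun k => Subtype.ext ?_
      show F.act (-1, 0) (F.act (-(k : ℤ), 0) a) = F.act (-((k : ℤ) + 1), 0) a
      rw [← F.act_nadd]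
      exact F.act_congr _ _ _ (by ring)
    norm_num at hne
  have hob : ∀ M : ℝ, ∃ n : ℤ, M < f n := by
    by_contra hcon
    push_neg at hcon
    obtain ⟨M, hM⟩ := hcon
    set c : ℕ → ℝ := fun k => f (k : ℤ) with hc
    have hmono' : Monotone c := fun k k' hk => hfmono (by omega)
    have hbdd : BddAbove (Set.range c) := ⟨M, by rintro r ⟨k, rfl⟩; exact hM _⟩
    have hlim := tendsto_atTop_ciSup hmono' hbdd
    have hwlim : Filter.Tendsto (fun k : ℕ => w (k : ℤ)) Filter.atTop
        (𝓝 (φ.symm (⨆ k, c k))) := by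
      have h2 := (φ.symm.continuous.tendsto _).comp hlim
      simpa [Function.comp_def, hc, hf, φ.symm_apply_apply] using h2
    have hne : (1 : ℤ) = 0 := by
      refine hrec 1 (fun k => w (k : ℤ)) _ hwlim fun k => Subtype.ext ?_
      show F.act (1, 0) (F.act ((k : ℤ), 0) a) = F.act (((k : ℤ) + 1), 0) a
      rw [← F.act_nadd]
      exact F.act_congr _ _ _ (by ring)
    norm_num at hne
  obtain ⟨n1, hn1⟩ := hub (φ ⟨x, rfl⟩)
  obtain ⟨n2, hn2⟩ := hob (φ ⟨x, rfl⟩)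
  have hbddP : ∃ b : ℤ, ∀ z : ℤ, (fun n => f n ≤ φ ⟨x, rfl⟩) z → z ≤ b := by
    refine ⟨n2, fun z hz => ?_⟩
    by_contra hzz
    push_neg at hzz
    exact absurd (le_trans (hfmono hzz.le) hz) (not_le.mpr hn2)
  obtain ⟨n0, hn0P, hn0max⟩ :=
    Int.exists_greatest_of_bdd hbddP ⟨n1, hn1.le⟩
  refine ⟨n0, (hφ (w n0) ⟨x, rfl⟩).mpr hn0P, ?_⟩
  have hnot : ¬ f (n0 + 1) ≤ φ ⟨x, rfl⟩ := fun hcon => by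
    have := hn0max _ hcon; omega
  exact (hφ (⟨x, rfl⟩ : {z : E // F.π z = s}) (w (n0 + 1))).mpr (le_of_not_ge hnot)

lemma exists_nonfixed (h1 : F.Q1) (s : S) : ∃ x : E, F.π x = s ∧ x ∉ F.rFixed := by
  have hBP := h1 s
  obtain ⟨φ, hφ⟩ := hBP.exists_homeo
  set D := F.fiberData (S := S) s with hD
  obtain ⟨z, hz⟩ := hBP.fixed_nonempty
  have hdisc := hBP.fixed_discrete
  have hopen : IsOpen ({⟨z, hz⟩} : Set D.rFixed) := isOpen_discrete _
  obtain ⟨V, hVopen, hVpre⟩ := (Topology.IsInducing.subtypeVal.isOpen_iff).mp hopen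
  have hzV : z ∈ V := by
    have : (⟨z, hz⟩ : D.rFixed) ∈ Subtype.val ⁻¹' V := by rw [hVpre]; exact rfl
    exact this
  have hVW : IsOpen (φ.symm ⁻¹' V) := hVopen.preimage φ.symm.continuous
  have hzW : φ z ∈ φ.symm ⁻¹' V := by simpa using hzV
  obtain ⟨ε, hε, hball⟩ := Metric.isOpen_iff.mp hVW _ hzW
  have hrW : φ z + ε / 2 ∈ φ.symm ⁻¹' V := by
    apply hball
    simp only [Metric.mem_ball, Real.dist_eq]
    rw [add_sub_cancel_left, abs_of_pos (by linarith)]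
    linarith
  set y := φ.symm (φ z + ε / 2) with hy
  have hyV : y ∈ V := hrW
  have hyz : y ≠ z := by
    intro h
    have h2 : φ z + ε / 2 = φ z := by
      have := congrArg φ h
      rwa [hy, φ.apply_symm_apply] at this
    linarith
  have hynf : y ∉ D.rFixed := by
    intro hyf
    apply hyz
    have h2 : (⟨y, hyf⟩ : D.rFixed) ∈ Subtype.val ⁻¹' V := hyV
    rw [hVpre] at h2
    exact congrArg Subtype.val (Set.mem_singleton_iff.mp h2)
  refine ⟨y.1, y.2, fun hfix => hynf fun t => Subtype.ext (hfix t)⟩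

lemma fle_closed_of (h4 : F.Q4) {X : Type*} [TopologicalSpace X] {f g : X → E}
    (hf : Continuous f) (hg : Continuous g) (hfg : ∀ x, F.π (f x) = F.π (g x)) :
    IsClosed {x | F.fle (f x) (g x)} := by
  have heq : {x | F.fle (f x) (g x)} =
      (fun x => (⟨(f x, g x), hfg x⟩ : F.fibProd)) ⁻¹' {p : F.fibProd | F.fle p.1.1 p.1.2} := rfl
  rw [heq]
  exact h4.preimage (Continuous.subtype_mk (hf.prodMk hg) _)

/-- The fundamental domain attached to a section. -/
def KSet (F : PreFamily S E) (U : Set S) (σ : U → E) : Set E :=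
  {x : E | ∃ u : U, F.π x = (u : S) ∧ F.fle (σ u) x ∧ F.fle x (F.act (1, 0) (σ u))}

lemma KSet_subset {U : Set S} (σ : U → E) : F.KSet U σ ⊆ F.π ⁻¹' U := by
  rintro x ⟨u, hu, -, -⟩
  simp only [Set.mem_preimage, hu]
  exact u.2

lemma KSet_relClosed (h4 : F.Q4) {U : Set S} (σ : U → E) (hσc : Continuous σ)
    (hσs : ∀ u, F.π (σ u) = (u : S)) :
    closure (F.KSet U σ) ∩ (F.π ⁻¹' U) ⊆ F.KSet U σ := by
  refine (relClosed_iff (F.KSet_subset σ)).mp ?_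
  have hq : Continuous fun x : (F.π ⁻¹' U : Set E) => (⟨F.π x.1, x.2⟩ : U) :=
    Continuous.subtype_mk (F.π_cont.comp continuous_subtype_val) _
  have e1 : Continuous fun x : (F.π ⁻¹' U : Set E) => σ ⟨F.π x.1, x.2⟩ := hσc.comp hq
  have e2 : Continuous fun x : (F.π ⁻¹' U : Set E) => F.act (1, 0) (σ ⟨F.π x.1, x.2⟩) :=
    F.act_cont.comp (continuous_const.prodMk e1)
  have heq : (Subtype.val ⁻¹' F.KSet U σ : Set (F.π ⁻¹' U)) =
      {x : (F.π ⁻¹' U : Set E) | F.fle (σ ⟨F.π x.1, x.2⟩) x.1} ∩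
      {x : (F.π ⁻¹' U : Set E) | F.fle x.1 (F.act (1, 0) (σ ⟨F.π x.1, x.2⟩))} := by
    ext x
    constructor
    · rintro ⟨u, hu, hl, hr⟩
      have hux : u = ⟨F.π x.1, x.2⟩ := Subtype.ext hu.symm
      rw [hux] at hl hr
      exact ⟨hl, hr⟩
    · rintro ⟨hl, hr⟩
      exact ⟨⟨F.π x.1, x.2⟩, rfl, hl, hr⟩
  rw [heq]
  exact (F.fle_closed_of h4 e1 continuous_subtype_val fun x => hσs _).inter
    (F.fle_closed_of h4 continuous_subtype_val e2 fun x => by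
      rw [F.act_fiber, hσs])

lemma zrel_equivalence : Equivalence F.zrel := by
  constructor
  · intro x; exact ⟨0, F.act_zero x⟩
  · rintro x y ⟨n, rfl⟩
    exact ⟨-n, F.act_cancel n x⟩
  · rintro x y z ⟨m, rfl⟩ ⟨n, rfl⟩
    exact ⟨n + m, F.act_nadd n m x⟩

end PreFamily

end Aux

/-- Given (Q1), (Q4), (Q5), property (Q3) is equivalent to (Q3'). -/
theorem Q3_iff_Q3' {S E : Type*} [TopologicalSpace S] [TopologicalSpace E]
    (F : PreFamily S E) (h1 : F.Q1) (h4 : F.Q4) (h5 : F.Q5) :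
    F.Q3 ↔
      ∀ U : Set S, IsOpen U → ∀ σ : U → E, Continuous σ → (∀ u, F.π (σ u) = (u : S)) →
        ∀ A : Set E,
          A ⊆ {x : E | ∃ u : U, F.π x = (u : S) ∧ F.fle (σ u) x ∧
                F.fle x (F.act (1, 0) (σ u))} →
          IsClosed (Subtype.val ⁻¹' A :
            Set {x : E | ∃ u : U, F.π x = (u : S) ∧ F.fle (σ u) x ∧
              F.fle x (F.act (1, 0) (σ u))}) →
          IsClosed (Subtype.val ⁻¹' (F.π '' A) : Set U) := by
  constructor
  · -- (Q3) → (Q3')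
    intro h3 U hU σ hσc hσs A hAsub hAcl
    have hAK : A ⊆ F.KSet U σ := hAsub
    have hOopen : IsOpen (F.π ⁻¹' U) := hU.preimage F.π_cont
    have hKrel : closure (F.KSet U σ) ∩ (F.π ⁻¹' U) ⊆ F.KSet U σ :=
      F.KSet_relClosed h4 σ hσc hσs
    have hArel : closure A ∩ (F.π ⁻¹' U) ⊆ A := by
      have hrel := (relClosed_iff hAK).mp hAcl
      rintro x ⟨hx1, hx2⟩
      exact hrel ⟨hx1, hKrel ⟨closure_mono hAK hx1, hx2⟩⟩
    set T := ⋃ n : ℤ, (fun y => F.act (n, 0) y) '' A with hT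
    have hAsubT : A ⊆ T := fun a ha => Set.mem_iUnion.mpr ⟨0, ⟨a, ha, F.act_zero' a⟩⟩
    have hTsat : ∀ n : ℤ, (fun y => F.act (n, 0) y) '' closure T ⊆ closure T := by
      intro n
      have hTT : (fun y => F.act (n, 0) y) '' T ⊆ T := by
        rintro _ ⟨y, hy, rfl⟩
        rw [hT, Set.mem_iUnion] at hy
        obtain ⟨m, z, hz, rfl⟩ := hy
        exact Set.mem_iUnion.mpr ⟨n + m, z, hz, F.act_nadd n m z⟩
      calc (fun y => F.act (n, 0) y) '' closure T
          ⊆ closure ((fun y => F.act (n, 0) y) '' T) :=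
            image_closure_subset_closure_image (F.act_cont_n n)
        _ ⊆ closure T := closure_mono hTT
    have hpre : Quot.mk F.zrel ⁻¹' (Quot.mk F.zrel '' closure T) = closure T := by
      ext z
      simp only [Set.mem_preimage, Set.mem_image]
      constructor
      · rintro ⟨w, hw, hq⟩
        rw [Quot.eq] at hq
        obtain ⟨n, rfl⟩ := (F.zrel_equivalence.eqvGen_iff).mp hq
        exact hTsat n ⟨w, hw, rfl⟩
      · intro hz
        exact ⟨z, hz, rfl⟩
    have hCclosed : IsClosed (Quot.mk F.zrel '' closure T) := by
      rw [← isQuotientMap_quot_mk.isClosed_preimage, hpre]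
      exact isClosed_closure
    have hπcl : IsClosed (F.π '' closure T) := by
      have h := h3 _ hCclosed
      exact (congrArg IsClosed (Set.image_image F.qπ (Quot.mk F.zrel) (closure T))).mp h
    have hmain : (Subtype.val ⁻¹' (F.π '' A) : Set U) = Subtype.val ⁻¹' (F.π '' closure T) := by
      ext u
      simp only [Set.mem_preimage]
      constructor
      · rintro ⟨a, ha, hπa⟩
        exact ⟨a, subset_closure (hAsubT ha), hπa⟩
      · rintro ⟨x, hxT, hπx⟩
        have hxO : x ∈ F.π ⁻¹' U := by
          simp only [Set.mem_preimage, hπx]; exact u.2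
        have haπ : F.π (σ u) = F.π x := by rw [hσs, hπx]
        obtain ⟨n0, hbr1, hbr2⟩ := F.bracket h1 haπ
        set W : Set (F.π ⁻¹' U : Set E) :=
          {y : (F.π ⁻¹' U : Set E) | ¬ F.fle y.1 (F.act (n0 - 1, 0) (σ ⟨F.π y.1, y.2⟩)) ∧
            ¬ F.fle (F.act (n0 + 2, 0) (σ ⟨F.π y.1, y.2⟩)) y.1} with hW
        have hq : Continuous fun y : (F.π ⁻¹' U : Set E) => (⟨F.π y.1, y.2⟩ : U) :=
          Continuous.subtype_mk (F.π_cont.comp continuous_subtype_val) _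
        have e1 : Continuous fun y : (F.π ⁻¹' U : Set E) => σ ⟨F.π y.1, y.2⟩ := hσc.comp hq
        have eL : Continuous fun y : (F.π ⁻¹' U : Set E) =>
            F.act (n0 - 1, 0) (σ ⟨F.π y.1, y.2⟩) :=
          F.act_cont.comp (continuous_const.prodMk e1)
        have eR : Continuous fun y : (F.π ⁻¹' U : Set E) =>
            F.act (n0 + 2, 0) (σ ⟨F.π y.1, y.2⟩) :=
          F.act_cont.comp (continuous_const.prodMk e1)
        have hWopen : IsOpen W := by
          have c1 := F.fle_closed_of h4 continuous_subtype_val eL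
            (fun y => by rw [F.act_fiber, hσs])
          have c2 := F.fle_closed_of h4 eR continuous_subtype_val
            (fun y => by rw [F.act_fiber, hσs])
          have hWc : W = ({y : (F.π ⁻¹' U : Set E) |
                F.fle y.1 (F.act (n0 - 1, 0) (σ ⟨F.π y.1, y.2⟩))} ∪
              {y : (F.π ⁻¹' U : Set E) |
                F.fle (F.act (n0 + 2, 0) (σ ⟨F.π y.1, y.2⟩)) y.1})ᶜ := by
            ext y
            simp only [hW, Set.mem_setOf_eq, Set.mem_compl_iff, Set.mem_union, not_or]
          rw [hWc]
          exact (c1.union c2).isOpen_compl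
        have hxW : (⟨x, hxO⟩ : (F.π ⁻¹' U : Set E)) ∈ W := by
          have hσu : σ ⟨F.π x, hxO⟩ = σ u := congrArg σ (Subtype.ext hπx)
          refine ⟨?_, ?_⟩
          · intro hcon
            rw [show σ (⟨F.π (⟨x, hxO⟩ : (F.π ⁻¹' U : Set E)).1,
                (⟨x, hxO⟩ : (F.π ⁻¹' U : Set E)).2⟩ : U) = σ u from hσu] at hcon
            have ht1 : F.fle (F.act (n0, 0) (σ u)) (F.act (n0 - 1, 0) (σ u)) :=
              F.fle_trans _ _ _ hbr1 hcon
            have ht2 : F.fle (F.act (n0 - 1, 0) (σ u)) (F.act (n0, 0) (σ u)) :=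
              F.chain h1 (by omega) (σ u)
            exact F.act_ne h1 (show n0 ≠ n0 - 1 by omega) (σ u) (F.fle_antisymm _ _ ht1 ht2)
          · intro hcon
            rw [show σ (⟨F.π (⟨x, hxO⟩ : (F.π ⁻¹' U : Set E)).1,
                (⟨x, hxO⟩ : (F.π ⁻¹' U : Set E)).2⟩ : U) = σ u from hσu] at hcon
            have ht1 : F.fle (F.act (n0 + 2, 0) (σ u)) (F.act (n0 + 1, 0) (σ u)) :=
              F.fle_trans _ _ _ hcon hbr2
            have ht2 : F.fle (F.act (n0 + 1, 0) (σ u)) (F.act (n0 + 2, 0) (σ u)) :=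
              F.chain h1 (by omega) (σ u)
            exact F.act_ne h1 (show n0 + 2 ≠ n0 + 1 by omega) (σ u)
              (F.fle_antisymm _ _ ht1 ht2)
        have hWE : IsOpen (Subtype.val '' W) := hOopen.isOpenMap_subtype_val _ hWopen
        have hxWE : x ∈ Subtype.val '' W := ⟨⟨x, hxO⟩, hxW, rfl⟩
        have hx2 : x ∈ closure (Subtype.val '' W ∩ T) := hWE.inter_closure ⟨hxWE, hxT⟩
        set A3 : Set E := ((fun y => F.act (n0 - 1, 0) y) '' A ∪ (fun y => F.act (n0, 0) y) '' A) ∪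
          (fun y => F.act (n0 + 1, 0) y) '' A with hA3
        have hsub3 : Subtype.val '' W ∩ T ⊆ A3 := by
          rintro y ⟨hyW, hyT⟩
          rw [hT, Set.mem_iUnion] at hyT
          obtain ⟨m, z, hz, rfl⟩ := hyT
          obtain ⟨y', hy'W, hy'val⟩ := hyW
          obtain ⟨uz, huz, hzl, hzr⟩ := hAK hz
          have hπy : F.π (F.act (m, 0) z) = (uz : S) := by rw [F.act_fiber, huz]
          have hbl : F.fle (F.act (m, 0) (σ uz)) (F.act (m, 0) z) :=
            F.mono_n h1 m (by rw [hσs, huz]) hzl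
          have hbr : F.fle (F.act (m, 0) z) (F.act (m + 1, 0) (σ uz)) := by
            have h2 := F.mono_n h1 m
              (show F.π z = F.π (F.act (1, 0) (σ uz)) by rw [F.act_fiber, hσs]; exact huz) hzr
            rwa [← F.act_nadd] at h2
          have huz' : (⟨F.π y'.1, y'.2⟩ : U) = uz := by
            apply Subtype.ext
            show F.π y'.1 = (uz : S)
            rw [show (y'.1 : E) = F.act (m, 0) z from hy'val, hπy]
          obtain ⟨hnc1, hnc2⟩ := hy'W
          rw [huz', hy'val] at hnc1 hnc2
          have hm1 : n0 - 1 ≤ m := by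
            by_contra hcc
            push_neg at hcc
            exact hnc1 (F.fle_trans _ _ _ hbr (F.chain h1 (by omega) (σ uz)))
          have hm2 : m ≤ n0 + 1 := by
            by_contra hcc
            push_neg at hcc
            exact hnc2 (F.fle_trans _ _ _ (F.chain h1 (by omega) (σ uz)) hbl)
          have hm3 : m = n0 - 1 ∨ m = n0 ∨ m = n0 + 1 := by omega
          rcases hm3 with rfl | rfl | rfl
          · exact Or.inl (Or.inl ⟨z, hz, rfl⟩)
          · exact Or.inl (Or.inr ⟨z, hz, rfl⟩)
          · exact Or.inr ⟨z, hz, rfl⟩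
        have hx3 : x ∈ closure A3 := closure_mono hsub3 hx2
        have htr : ∀ k : ℤ, closure ((fun y => F.act (k, 0) y) '' A) ∩ (F.π ⁻¹' U) ⊆
            (fun y => F.act (k, 0) y) '' A := by
          intro k
          rintro y ⟨hyc, hyO⟩
          have h1' : F.act (-k, 0) y ∈
              closure ((fun w => F.act (-k, 0) w) '' ((fun w => F.act (k, 0) w) '' A)) :=
            image_closure_subset_closure_image (F.act_cont_n (-k)) ⟨y, hyc, rfl⟩
          have himg2 : (fun w => F.act (-k, 0) w) '' ((fun w => F.act (k, 0) w) '' A) = A := by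
            rw [Set.image_image]
            simp only [F.act_cancel, Set.image_id']
          rw [himg2] at h1'
          have hyO2 : F.act (-k, 0) y ∈ F.π ⁻¹' U := by
            simpa only [Set.mem_preimage, F.act_fiber] using hyO
          have hyA : F.act (-k, 0) y ∈ A := hArel ⟨h1', hyO2⟩
          refine ⟨F.act (-k, 0) y, hyA, ?_⟩
          show F.act (k, 0) (F.act (-k, 0) y) = y
          have h2 := F.act_cancel (-k) y
          rwa [neg_neg] at h2
        have hA3rel : closure A3 ∩ (F.π ⁻¹' U) ⊆ A3 := by
          rintro y ⟨hyc, hyO⟩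
          rw [hA3, closure_union, closure_union] at hyc
          rcases hyc with (h | h) | h
          · exact Or.inl (Or.inl (htr _ ⟨h, hyO⟩))
          · exact Or.inl (Or.inr (htr _ ⟨h, hyO⟩))
          · exact Or.inr (htr _ ⟨h, hyO⟩)
        have hxA3 : x ∈ A3 := hA3rel ⟨hx3, hxO⟩
        rcases hxA3 with (⟨z, hz, hzx⟩ | ⟨z, hz, hzx⟩) | ⟨z, hz, hzx⟩ <;>
          exact ⟨z, hz, by rw [← hπx, ← hzx, F.act_fiber]⟩
    rw [hmain]
    exact hπcl.preimage continuous_subtype_val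
  · -- (Q3') → (Q3)
    intro hRHS C hC
    have hBcl : IsClosed (Quot.mk F.zrel ⁻¹' C) := hC.preimage continuous_quot_mk
    have hBsat : ∀ (n : ℤ) (x : E), x ∈ Quot.mk F.zrel ⁻¹' C →
        F.act (n, 0) x ∈ Quot.mk F.zrel ⁻¹' C := by
      intro n x hx
      have hmk : Quot.mk F.zrel (F.act (n, 0) x) = Quot.mk F.zrel x :=
        (Quot.sound ⟨n, rfl⟩).symm
      show Quot.mk F.zrel (F.act (n, 0) x) ∈ C
      rw [hmk]
      exact hx
    have himg : F.qπ '' C = F.π '' (Quot.mk F.zrel ⁻¹' C) := by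
      ext s
      constructor
      · rintro ⟨q, hq, rfl⟩
        obtain ⟨x, rfl⟩ := Quot.exists_rep q
        exact ⟨x, hq, rfl⟩
      · rintro ⟨x, hx, rfl⟩
        exact ⟨Quot.mk F.zrel x, hx, rfl⟩
    rw [himg, ← closure_subset_iff_isClosed]
    intro s hs
    obtain ⟨x0, hx0π, hx0nf⟩ := F.exists_nonfixed h1 s
    obtain ⟨U, hUopen, hsU0, σ, hσc, hσs, -, -⟩ := h5 x0 hx0nf
    rw [hx0π] at hsU0
    have hAsub : (Quot.mk F.zrel ⁻¹' C) ∩ F.KSet U σ ⊆ F.KSet U σ := Set.inter_subset_right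
    have hAcl : IsClosed (Subtype.val ⁻¹' ((Quot.mk F.zrel ⁻¹' C) ∩ F.KSet U σ) :
        Set (F.KSet U σ)) := by
      have heq : (Subtype.val ⁻¹' ((Quot.mk F.zrel ⁻¹' C) ∩ F.KSet U σ) : Set (F.KSet U σ)) =
          Subtype.val ⁻¹' (Quot.mk F.zrel ⁻¹' C) := by
        ext y
        simp only [Set.mem_preimage, Set.mem_inter_iff, and_iff_left_iff_imp]
        intro _
        exact y.2
      rw [heq]
      exact hBcl.preimage continuous_subtype_val
    have key := hRHS U hUopen σ hσc hσs ((Quot.mk F.zrel ⁻¹' C) ∩ F.KSet U σ) hAsub hAcl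
    have hπAU : F.π '' ((Quot.mk F.zrel ⁻¹' C) ∩ F.KSet U σ) ⊆ U := by
      rintro t ⟨y, hy, rfl⟩
      obtain ⟨u, hu, -, -⟩ := hy.2
      rw [hu]
      exact u.2
    have hrel := (relClosed_iff hπAU).mp key
    have hAeq : F.π '' (Quot.mk F.zrel ⁻¹' C) ∩ U ⊆
        F.π '' ((Quot.mk F.zrel ⁻¹' C) ∩ F.KSet U σ) := by
      rintro t ⟨⟨y, hy, rfl⟩, htU⟩
      have haπ : F.π (σ ⟨F.π y, htU⟩) = F.π y := by rw [hσs]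
      obtain ⟨n, hn1, hn2⟩ := F.bracket h1 haπ
      refine ⟨F.act (-n, 0) y, ⟨hBsat _ _ hy, ?_⟩, by rw [F.act_fiber]⟩
      refine ⟨⟨F.π y, htU⟩, by rw [F.act_fiber], ?_, ?_⟩
      · have h2 := F.mono_n h1 (-n)
          (show F.π (F.act (n, 0) (σ ⟨F.π y, htU⟩)) = F.π y by rw [F.act_fiber, hσs]) hn1
        rwa [← F.act_nadd, neg_add_cancel, F.act_zero'] at h2
      · have h2 := F.mono_n h1 (-n)
          (show F.π y = F.π (F.act (n + 1, 0) (σ ⟨F.π y, htU⟩)) by rw [F.act_fiber, hσs]) hn2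
        rw [← F.act_nadd] at h2
        rwa [F.act_congr (-n + (n + 1)) 1 _ (by ring)] at h2
    have hsA : s ∈ closure (F.π '' ((Quot.mk F.zrel ⁻¹' C) ∩ F.KSet U σ)) := by
      have h3 := hUopen.inter_closure ⟨hsU0, hs⟩
      exact closure_mono (fun t ht => hAeq ⟨ht.2, ht.1⟩) h3
    obtain ⟨y, hy, hyπ⟩ := hrel ⟨hsA, hsU0⟩
    exact ⟨y, hy.1, hyπ⟩


end
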